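/- arXiv:2309.02497 — 3 statements merged into one kernel-verified Lean document; each statement's English description precedes it below -/
import Mathlib

section
/- Let n ≥ 1 and let B and C be nonzero positive semidefinite n×n complex matrices. Then Tr(BC) = Tr(B) · Tr(C) holds if and only if there exist a unit vector v ∈ ℂⁿ and real numbers β > 0 and γ > 0 such that B = β · v vᴴ and C = γ · v vᴴ, i.e. if and only if B and C are both positive scalar multiples of a common rank-one orthogonal projection. -/
open Matrix ComplexOrder
open scoped MatrixOrder

/-!
Since `C ≤ Tr C • 1`, the defect `Tr B * Tr C - Tr (B * C) = Tr (B * (Tr C • 1 - C))` is the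
trace of a product of two positive semidefinite matrices, and such a trace vanishes only if the
product does. Equality therefore forces `B * C = Tr C • B` and symmetrically `C * B = Tr B • C`;
taking adjoints, `B` and `C` are proportional, so `B * B = Tr B • B`. Then `B / Tr B` is an
orthogonal projection of trace one, i.e. `v vᴴ` for a unit vector `v`.
-/

namespace Matrix

variable {n 𝕜 : Type*} [Fintype n] [RCLike 𝕜]

theorem PosSemidef.le_trace_smul_one [DecidableEq n] {A : Matrix n n 𝕜} (hA : A.PosSemidef) :
    A ≤ A.trace • (1 : Matrix n n 𝕜) := by
  have htrace : A.trace • (1 : Matrix n n 𝕜) = algebraMap ℝ _ (∑ i, hA.1.eigenvalues i) := by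
    rw [hA.1.trace_eq_sum_eigenvalues, Algebra.algebraMap_eq_smul_one, ← RCLike.ofReal_sum,
      RCLike.real_smul_eq_coe_smul (K := 𝕜)]
  rw [htrace]
  refine le_algebraMap_of_spectrum_le fun x hx => ?_
  obtain ⟨i, rfl⟩ := hA.1.spectrum_real_eq_range_eigenvalues ▸ hx
  exact Finset.single_le_sum (fun j _ => hA.eigenvalues_nonneg j) (Finset.mem_univ i)

theorem PosSemidef.trace_pos_of_ne_zero {A : Matrix n n 𝕜} (hA : A.PosSemidef) (hA0 : A ≠ 0) :
    0 < A.trace :=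
  hA.trace_nonneg.lt_of_ne' (hA.trace_eq_zero_iff.not.mpr hA0)

theorem PosSemidef.mul_eq_zero_of_trace_mul_eq_zero {A B : Matrix n n 𝕜}
    (hA : A.PosSemidef) (hB : B.PosSemidef) (h : (A * B).trace = 0) : A * B = 0 := by
  classical
  obtain ⟨X, hXA, hX⟩ : ∃ X, X * X = A ∧ Xᴴ = X :=
    ⟨CFC.sqrt A, CFC.sqrt_mul_sqrt_self A hA.nonneg, (CFC.sqrt_nonneg A).isSelfAdjoint⟩
  obtain ⟨Y, hYB, hY⟩ : ∃ Y, Y * Y = B ∧ Yᴴ = Y :=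
    ⟨CFC.sqrt B, CFC.sqrt_mul_sqrt_self B hB.nonneg, (CFC.sqrt_nonneg B).isSelfAdjoint⟩
  subst hXA hYB
  -- `Tr (X X Y Y) = Tr ((Y X)ᴴ (Y X))`
  have hYX : Y * X = 0 := by
    rw [← trace_conjTranspose_mul_self_eq_zero_iff, conjTranspose_mul, hX, hY, ← h]
    simp only [← mul_assoc]
    rw [trace_mul_comm, ← mul_assoc, ← mul_assoc]
  have hXY : X * Y = 0 := by
    rw [← hX, ← hY, ← conjTranspose_mul, hYX, conjTranspose_zero]
  rw [mul_assoc, ← mul_assoc X Y, hXY, zero_mul, mul_zero]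

theorem PosSemidef.mul_eq_trace_smul_of_trace_mul_eq {A B : Matrix n n 𝕜}
    (hA : A.PosSemidef) (hB : B.PosSemidef) (h : (A * B).trace = A.trace * B.trace) :
    A * B = B.trace • A := by
  classical
  have hAD : A * (B.trace • 1 - B) = 0 :=
    hA.mul_eq_zero_of_trace_mul_eq_zero hB.le_trace_smul_one <| by
      rw [mul_sub, trace_sub, mul_smul_comm, mul_one, trace_smul, h, smul_eq_mul, mul_comm,
        sub_self]
  rwa [mul_sub, mul_smul_comm, mul_one, sub_eq_zero, eq_comm] at hAD

theorem exists_smul_star_dotProduct_self_eq_one {u : n → 𝕜} (hu : u ≠ 0) :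
    ∃ c : 𝕜, star (c • u) ⬝ᵥ (c • u) = 1 := by
  have hx : WithLp.toLp 2 u ≠ 0 := by simpa using hu
  refine ⟨(‖WithLp.toLp 2 u‖⁻¹ : 𝕜), ?_⟩
  rw [dotProduct_comm, ← EuclideanSpace.inner_toLp_toLp, inner_self_eq_norm_sq_to_K,
    WithLp.toLp_smul, norm_smul_inv_norm hx]
  simp

theorem IsHermitian.star_trace {A : Matrix n n 𝕜} (hA : A.IsHermitian) :
    star A.trace = A.trace := by
  rw [← trace_conjTranspose, hA.eq]

theorem IsHermitian.exists_eq_vecMulVec_of_isIdempotentElem_of_trace_eq_one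
    {P : Matrix n n 𝕜} (hP : P.IsHermitian) (hPP : IsIdempotentElem P) (htr : P.trace = 1) :
    ∃ v : n → 𝕜, star v ⬝ᵥ v = 1 ∧ P = vecMulVec v (star v) := by
  obtain ⟨w, hw⟩ : ∃ w, P *ᵥ w ≠ 0 := by
    by_contra! h
    have : P = 0 := ext_iff_mulVec.mpr fun w => by simpa using h w
    simp [this] at htr
  obtain ⟨c, hc⟩ := exists_smul_star_dotProduct_self_eq_one hw
  set v := c • P *ᵥ w
  have hPv : P *ᵥ v = v := by rw [mulVec_smul, mulVec_mulVec, hPP.eq]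
  refine ⟨v, hc, ?_⟩
  set V := vecMulVec v (star v)
  have hPV : P * V = V := by rw [mul_vecMulVec, hPv]
  have hVP : V * P = V := by rw [vecMulVec_mul, ← hP.eq, ← star_mulVec, hPv]
  have hVV : V * V = V := by rw [vecMulVec_mul_vecMulVec, hc, one_smul]
  have hVH : Vᴴ = V := by rw [conjTranspose_vecMulVec, star_star]
  -- `P - V` is an orthogonal projection of trace zero
  have hQ : (P - V)ᴴ * (P - V) = P - V := by
    rw [conjTranspose_sub, hP.eq, hVH]
    simp only [sub_mul, mul_sub, hPP.eq, hPV, hVP, hVV]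
    abel
  rw [← sub_eq_zero, ← trace_conjTranspose_mul_self_eq_zero_iff, hQ, trace_sub, htr,
    trace_vecMulVec, dotProduct_comm, hc, sub_self]

theorem IsHermitian.exists_eq_trace_smul_vecMulVec {A : Matrix n n 𝕜} (hA : A.IsHermitian)
    (htr : A.trace ≠ 0) (hAA : A * A = A.trace • A) :
    ∃ v : n → 𝕜, star v ⬝ᵥ v = 1 ∧ A = A.trace • vecMulVec v (star v) := by
  have hP : (A.trace⁻¹ • A).IsHermitian := by
    rw [IsHermitian, conjTranspose_smul, star_inv₀, hA.star_trace, hA.eq]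
  have hPP : IsIdempotentElem (A.trace⁻¹ • A) := by
    rw [IsIdempotentElem, smul_mul_smul_comm, hAA, smul_smul, inv_mul_cancel_right₀ htr]
  obtain ⟨v, hv, hPv⟩ := hP.exists_eq_vecMulVec_of_isIdempotentElem_of_trace_eq_one hPP
    (by rw [trace_smul, smul_eq_mul, inv_mul_cancel₀ htr])
  exact ⟨v, hv, by rw [← hPv, smul_smul, mul_inv_cancel₀ htr, one_smul]⟩

theorem PosSemidef.exists_eq_trace_smul_vecMulVec_of_trace_mul_eq
    {A B : Matrix n n 𝕜} (hA : A.PosSemidef) (hB : B.PosSemidef) (hA0 : A ≠ 0) (hB0 : B ≠ 0)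
    (h : (A * B).trace = A.trace * B.trace) :
    ∃ v : n → 𝕜, star v ⬝ᵥ v = 1 ∧
      A = A.trace • vecMulVec v (star v) ∧ B = B.trace • vecMulVec v (star v) := by
  have hAB := hA.mul_eq_trace_smul_of_trace_mul_eq hB h
  have hBA := hB.mul_eq_trace_smul_of_trace_mul_eq hA (by rw [trace_mul_comm, h, mul_comm])
  have htrA : A.trace ≠ 0 := (hA.trace_pos_of_ne_zero hA0).ne'
  have htrB : B.trace ≠ 0 := (hB.trace_pos_of_ne_zero hB0).ne'
  have hprop : B.trace • A = A.trace • B :=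
    calc B.trace • A = A * B := hAB.symm
      _ = (B * A)ᴴ := by rw [conjTranspose_mul, hA.1.eq, hB.1.eq]
      _ = A.trace • B := by rw [hBA, conjTranspose_smul, hA.1.star_trace, hB.1.eq]
  have hAA : A * A = A.trace • A := by
    refine smul_right_injective _ htrB ?_
    calc B.trace • (A * A) = A * (A.trace • B) := by rw [← hprop, mul_smul_comm]
      _ = B.trace • (A.trace • A) := by rw [mul_smul_comm, hAB, smul_comm]
  obtain ⟨v, hv, hAv⟩ := hA.1.exists_eq_trace_smul_vecMulVec htrA hAA
  refine ⟨v, hv, hAv, ?_⟩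
  calc B = A.trace⁻¹ • (B.trace • A) := by rw [hprop, inv_smul_smul₀ htrA]
    _ = A.trace⁻¹ • (B.trace • A.trace • vecMulVec v (star v)) := by rw [← hAv]
    _ = B.trace • vecMulVec v (star v) := by rw [smul_comm B.trace, inv_smul_smul₀ htrA]

end Matrix

theorem trace_mul_eq_trace_mul_trace_iff_general
    (n : ℕ) (B C : Matrix (Fin n) (Fin n) ℂ)
    (hB : B.PosSemidef) (hC : C.PosSemidef) (hB0 : B ≠ 0) (hC0 : C ≠ 0) :
    (B * C).trace = B.trace * C.trace ↔
      ∃ (v : Fin n → ℂ) (β γ : ℝ), star v ⬝ᵥ v = 1 ∧ 0 < β ∧ 0 < γ ∧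
        B = (β : ℂ) • vecMulVec v (star v) ∧ C = (γ : ℂ) • vecMulVec v (star v) := by
  constructor
  · intro h
    obtain ⟨v, hv, hBv, hCv⟩ := hB.exists_eq_trace_smul_vecMulVec_of_trace_mul_eq hC hB0 hC0 h
    obtain ⟨β, hβ, hβB⟩ := RCLike.pos_iff_exists_ofReal.mp (hB.trace_pos_of_ne_zero hB0)
    obtain ⟨γ, hγ, hγC⟩ := RCLike.pos_iff_exists_ofReal.mp (hC.trace_pos_of_ne_zero hC0)
    rw [← hβB] at hBv
    rw [← hγC] at hCv
    exact ⟨v, β, γ, hv, hβ, hγ, hBv, hCv⟩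
  · rintro ⟨v, β, γ, hv, -, -, rfl, rfl⟩
    simp [vecMulVec_mul_vecMulVec, dotProduct_comm v, hv, mul_comm]

/-- For nonzero positive semidefinite `n × n` complex matrices `B`, `C` (with
`n ≥ 1`), the trace inequality is saturated, `Tr(BC) = Tr(B) * Tr(C)`, if and
only if `B` and `C` are positive scalar multiples of a common rank-one
orthogonal projection `v vᴴ` determined by a unit vector `v`. -/
theorem trace_mul_eq_trace_mul_trace_iff
    (n : ℕ) (hn : 1 ≤ n) (B C : Matrix (Fin n) (Fin n) ℂ)
    (hB : B.PosSemidef) (hC : C.PosSemidef) (hB0 : B ≠ 0) (hC0 : C ≠ 0) :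
    (B * C).trace = B.trace * C.trace ↔
      ∃ (v : Fin n → ℂ) (β γ : ℝ), star v ⬝ᵥ v = 1 ∧ 0 < β ∧ 0 < γ ∧
        B = (β : ℂ) • vecMulVec v (star v) ∧ C = (γ : ℂ) • vecMulVec v (star v) :=
  trace_mul_eq_trace_mul_trace_iff_general n B C hB hC hB0 hC0
end

section
/- Let η : ℝ → ℝ be a smooth, strictly positive, 2π-periodic function satisfying the winding constraint ∫₀^{2π} η(u) du = 2π. Then ∫₀^{2π} ( η(u)² − (η′(u)/η(u))² ) du ≤ 2π, with equality attained at η ≡ 1. Equivalently, the Schwarzian action I_Schwarz = −φ̄_b ∫₀^{2π} (η² − (η′/η)²) du with constant φ̄_b > 0 is bounded below by −2π φ̄_b. -/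
open Real intervalIntegral

open MeasureTheory Set Filter Topology

noncomputable section SchwAuxSec

namespace SchwAux

/-- primitive of `η` -/
def th (η : ℝ → ℝ) (u : ℝ) : ℝ := ∫ t in (0:ℝ)..u, η t

/-- the Hill potential associated to `η` -/
def Qf (η : ℝ → ℝ) (u : ℝ) : ℝ :=
  (η u)^2/4 + deriv (deriv η) u / (2 * η u) - 3/4 * (deriv η u / η u)^2

/-- logarithmic derivative of the solution `sin ((θ - c)/2)/√η` of Hill's equation -/
def rf (η : ℝ → ℝ) (c : ℝ) (u : ℝ) : ℝ :=
  η u / 2 * (Real.cos ((th η u - c)/2) / Real.sin ((th η u - c)/2))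
    - deriv η u / (2 * η u)

lemma smooth_facts {f : ℝ → ℝ} (hf : ContDiff ℝ (⊤ : ℕ∞) f) :
    Differentiable ℝ f ∧ Differentiable ℝ (deriv f) ∧ Continuous (deriv (deriv f)) := by
  have h2 : ContDiff ℝ 3 f := hf.of_le (WithTop.coe_le_coe.mpr le_top)
  have hd : ContDiff ℝ 2 (deriv f) := (contDiff_succ_iff_deriv.mp h2).2.2
  have hdd : ContDiff ℝ 1 (deriv (deriv f)) := (contDiff_succ_iff_deriv.mp hd).2.2
  exact ⟨h2.differentiable (by norm_num), hd.differentiable (by norm_num), hdd.continuous⟩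

lemma hasDerivAt_th {η : ℝ → ℝ} (hηc : Continuous η) (u : ℝ) :
    HasDerivAt (th η) (η u) u :=
  (hηc.integral_hasStrictDerivAt 0 u).hasDerivAt

/-- One-sided comparison on a piece between consecutive matched zeros. -/
lemma piece {h b db Φ : ℝ → ℝ} {a c La Lc : ℝ} (hac : a < c)
    (hΦ : ∀ u, HasDerivAt Φ (h u) u)
    (hb : ∀ u ∈ Set.Ioo a c, HasDerivAt b (db u) u)
    (hle : ∀ u ∈ Set.Ioo a c, db u ≤ h u)
    (hba : Filter.Tendsto b (nhdsWithin a (Set.Ioi a)) (nhds La))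
    (hbc : Filter.Tendsto b (nhdsWithin c (Set.Iio c)) (nhds Lc)) :
    Lc - La ≤ Φ c - Φ a := by
  set Z : ℝ → ℝ := fun u => Φ u - b u with hZ
  have hZd : ∀ u ∈ Set.Ioo a c, HasDerivAt Z (h u - db u) u :=
    fun u hu => (hΦ u).sub (hb u hu)
  have hZmono : MonotoneOn Z (Set.Ioo a c) := by
    apply monotoneOn_of_deriv_nonneg (convex_Ioo a c)
    · exact fun u hu => (hZd u hu).continuousAt.continuousWithinAt
    · rw [interior_Ioo]
      exact fun u hu => (hZd u hu).differentiableAt.differentiableWithinAt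
    · rw [interior_Ioo]
      intro u hu
      rw [(hZd u hu).deriv]
      linarith [hle u hu]
  set m : ℝ := (a + c) / 2 with hm
  have ham : a < m := by simp only [hm]; linarith
  have hmc : m < c := by simp only [hm]; linarith
  have hZa : Filter.Tendsto Z (nhdsWithin a (Set.Ioi a)) (nhds (Φ a - La)) :=
    Filter.Tendsto.sub ((hΦ a).continuousAt.tendsto.mono_left nhdsWithin_le_nhds) hba
  have hZc : Filter.Tendsto Z (nhdsWithin c (Set.Iio c)) (nhds (Φ c - Lc)) :=
    Filter.Tendsto.sub ((hΦ c).continuousAt.tendsto.mono_left nhdsWithin_le_nhds) hbc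
  have h1 : Φ a - La ≤ Z m := by
    refine le_of_tendsto hZa ?_
    filter_upwards [Ioo_mem_nhdsGT ham] with u hu
    exact hZmono ⟨hu.1, hu.2.trans hmc⟩ ⟨ham, hmc⟩ hu.2.le
  have h2 : Z m ≤ Φ c - Lc := by
    refine ge_of_tendsto hZc ?_
    filter_upwards [Ioo_mem_nhdsLT hmc] with u hu
    exact hZmono ⟨ham, hmc⟩ ⟨ham.trans hu.1, hu.2⟩ hu.1.le
  linarith

/-- The boundary function `ψ² r` tends to zero at a matched zero. -/
lemma tendsto_b_zero {η ψ A : ℝ → ℝ} {u₀ p α : ℝ}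
    (hηc : Continuous η) (hη0 : η u₀ ≠ 0) (hdc : Continuous (deriv η))
    (hψ0 : ψ u₀ = 0) (hψ : HasDerivAt ψ p u₀)
    (hA : HasDerivAt A α u₀) (hα : α ≠ 0)
    (hsA : Real.sin (A u₀) = 0) :
    Filter.Tendsto
      (fun u => (ψ u)^2 * (η u / 2 * (Real.cos (A u) / Real.sin (A u))
        - deriv η u / (2 * η u)))
      (nhdsWithin u₀ {u₀}ᶜ) (nhds 0) := by
  have hcos : Real.cos (A u₀) ≠ 0 := by
    have := Real.sin_sq_add_cos_sq (A u₀)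
    intro h; rw [h, hsA] at this; norm_num at this
  have T1 : Filter.Tendsto (fun u => (ψ u)^2 * (deriv η u / (2 * η u)))
      (nhdsWithin u₀ {u₀}ᶜ) (nhds 0) := by
    have hca : ContinuousAt (fun u => (ψ u)^2 * (deriv η u / (2 * η u))) u₀ := by
      apply ContinuousAt.mul (hψ.continuousAt.pow 2)
      exact (hdc.continuousAt).div (continuousAt_const.mul hηc.continuousAt)
        (by simpa using hη0)
    have h2 : Filter.Tendsto (fun u => (ψ u)^2 * (deriv η u / (2 * η u)))
        (nhdsWithin u₀ {u₀}ᶜ) (nhds ((ψ u₀)^2 * (deriv η u₀ / (2 * η u₀)))) :=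
      hca.tendsto.mono_left nhdsWithin_le_nhds
    simpa [hψ0] using h2
  have hsinA : HasDerivAt (fun u => Real.sin (A u)) (Real.cos (A u₀) * α) u₀ :=
    (Real.hasDerivAt_sin (A u₀)).comp u₀ hA
  have T2 : Filter.Tendsto (fun u => (ψ u)^2 * (η u / 2 * (Real.cos (A u) / Real.sin (A u))))
      (nhdsWithin u₀ {u₀}ᶜ) (nhds 0) := by
    have heq : ∀ u ∈ ({u₀}ᶜ : Set ℝ),
        (slope ψ u₀ u)^2 * ((u - u₀) * (η u / 2 * Real.cos (A u))
              * (slope (fun x => Real.sin (A x)) u₀ u)⁻¹)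
          = (ψ u)^2 * (η u / 2 * (Real.cos (A u) / Real.sin (A u))) := by
      intro u hu
      have hne : u - u₀ ≠ 0 := sub_ne_zero.mpr hu
      rw [slope_def_field, slope_def_field, hψ0, hsA, sub_zero, sub_zero]
      rcases eq_or_ne (Real.sin (A u)) 0 with h | h
      · simp [h]
      · field_simp
    have hslopeψ : Filter.Tendsto (slope ψ u₀) (nhdsWithin u₀ {u₀}ᶜ) (nhds p) :=
      hasDerivAt_iff_tendsto_slope.mp hψ
    have hslopes : Filter.Tendsto (slope (fun x => Real.sin (A x)) u₀)
        (nhdsWithin u₀ {u₀}ᶜ) (nhds (Real.cos (A u₀) * α)) :=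
      hasDerivAt_iff_tendsto_slope.mp hsinA
    have hinv : Filter.Tendsto (fun u => (slope (fun x => Real.sin (A x)) u₀ u)⁻¹)
        (nhdsWithin u₀ {u₀}ᶜ) (nhds (Real.cos (A u₀) * α)⁻¹) :=
      hslopes.inv₀ (mul_ne_zero hcos hα)
    have hsub : Filter.Tendsto (fun u : ℝ => u - u₀) (nhdsWithin u₀ {u₀}ᶜ) (nhds 0) := by
      have : ContinuousAt (fun u : ℝ => u - u₀) u₀ := by fun_prop
      simpa using this.tendsto.mono_left nhdsWithin_le_nhds
    have hcont : Filter.Tendsto (fun u => η u / 2 * Real.cos (A u))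
        (nhdsWithin u₀ {u₀}ᶜ) (nhds (η u₀ / 2 * Real.cos (A u₀))) := by
      have : ContinuousAt (fun u => η u / 2 * Real.cos (A u)) u₀ :=
        (hηc.continuousAt.div_const 2).mul
          (Real.continuous_cos.continuousAt.comp hA.continuousAt)
      exact this.tendsto.mono_left nhdsWithin_le_nhds
    have hprod := ((hslopeψ.pow 2).mul ((hsub.mul hcont).mul hinv))
    rw [show (p^2 * ((0 * (η u₀ / 2 * Real.cos (A u₀))) * (Real.cos (A u₀) * α)⁻¹)) = 0 by ring]
      at hprod
    exact hprod.congr' (Filter.eventuallyEq_of_mem self_mem_nhdsWithin heq)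
  have := T2.sub T1
  rw [sub_zero] at this
  exact this.congr (fun u => by ring)

lemma hasDerivAt_rf {η : ℝ → ℝ} (hηc : Continuous η)
    (hd1 : Differentiable ℝ η) (hd2 : Differentiable ℝ (deriv η))
    {u : ℝ} (hη0 : η u ≠ 0) (c : ℝ)
    (hs : Real.sin ((th η u - c)/2) ≠ 0) :
    HasDerivAt (rf η c) (-Qf η u - (rf η c u)^2) u := by
  have hth : HasDerivAt (th η) (η u) u := hasDerivAt_th hηc u
  have hA : HasDerivAt (fun x => (th η x - c)/2) (η u / 2) u :=
    (hth.sub_const c).div_const 2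
  set A : ℝ → ℝ := fun x => (th η x - c)/2 with hAdef
  have hcosA : HasDerivAt (fun x => Real.cos (A x))
      (-Real.sin (A u) * (η u / 2)) u := (Real.hasDerivAt_cos (A u)).comp u hA
  have hsinA : HasDerivAt (fun x => Real.sin (A x))
      (Real.cos (A u) * (η u / 2)) u := (Real.hasDerivAt_sin (A u)).comp u hA
  have hcot : HasDerivAt (fun x => Real.cos (A x) / Real.sin (A x))
      ((-Real.sin (A u) * (η u / 2) * Real.sin (A u)
        - Real.cos (A u) * (Real.cos (A u) * (η u / 2))) / (Real.sin (A u))^2) u :=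
    hcosA.div hsinA hs
  have hfirst : HasDerivAt (fun x => η x / 2 * (Real.cos (A x) / Real.sin (A x)))
      (deriv η u / 2 * (Real.cos (A u) / Real.sin (A u))
        + η u / 2 * ((-Real.sin (A u) * (η u / 2) * Real.sin (A u)
        - Real.cos (A u) * (Real.cos (A u) * (η u / 2))) / (Real.sin (A u))^2)) u :=
    (((hd1 u).hasDerivAt).div_const 2).mul hcot
  have hsecond : HasDerivAt (fun x => deriv η x / (2 * η x))
      ((deriv (deriv η) u * (2 * η u) - deriv η u * (2 * deriv η u)) / (2 * η u)^2) u := by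
    refine ((hd2 u).hasDerivAt).div (((hd1 u).hasDerivAt).const_mul 2) ?_
    simpa using hη0
  have hmain := hfirst.sub hsecond
  have harith :
      (deriv η u / 2 * (Real.cos (A u) / Real.sin (A u))
        + η u / 2 * ((-Real.sin (A u) * (η u / 2) * Real.sin (A u)
        - Real.cos (A u) * (Real.cos (A u) * (η u / 2))) / (Real.sin (A u))^2))
      - ((deriv (deriv η) u * (2 * η u) - deriv η u * (2 * deriv η u)) / (2 * η u)^2)
      = -Qf η u - (rf η c u)^2 := by
    rw [Qf, rf]
    simp only [hAdef]
    field_simp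
    ring
  rw [harith] at hmain
  exact hmain

/-- derivative of `ψ² · r` -/
lemma hasDerivAt_b {η : ℝ → ℝ} (hηc : Continuous η)
    (hd1 : Differentiable ℝ η) (hd2 : Differentiable ℝ (deriv η))
    {u : ℝ} (hη0 : η u ≠ 0) (c : ℝ)
    (hs : Real.sin ((th η u - c)/2) ≠ 0)
    {ψ : ℝ → ℝ} {q : ℝ} (hψ : HasDerivAt ψ q u) :
    HasDerivAt (fun x => (ψ x)^2 * rf η c x)
      ((q^2 - Qf η u * (ψ u)^2) - (q - rf η c u * ψ u)^2) u := by
  have h := (hψ.pow 2).mul (hasDerivAt_rf hηc hd1 hd2 hη0 c hs)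
  refine h.congr_deriv ?_
  push_cast
  simp only [Pi.pow_apply]
  ring


/-- test integrands -/
def h1f (η : ℝ → ℝ) (u : ℝ) : ℝ := (Real.sin (u/2)/2)^2 - Qf η u * (Real.cos (u/2))^2
def h2f (η : ℝ → ℝ) (u : ℝ) : ℝ := (Real.cos (u/2)/2)^2 - Qf η u * (Real.sin (u/2))^2
def dG (η : ℝ → ℝ) (u : ℝ) : ℝ :=
  (deriv (deriv η) u * η u - deriv η u * deriv η u) / (η u)^2

lemma continuous_th {η : ℝ → ℝ} (hηc : Continuous η) : Continuous (th η) :=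
  Differentiable.continuous (fun x => (hasDerivAt_th hηc x).differentiableAt)

lemma continuousAt_rf {η : ℝ → ℝ} (hηc : Continuous η) (hdc : Continuous (deriv η))
    {c u : ℝ} (hη0 : η u ≠ 0) (hs : Real.sin ((th η u - c)/2) ≠ 0) :
    ContinuousAt (rf η c) u := by
  have hthc : Continuous (fun x => (th η x - c)/2) :=
    ((continuous_th hηc).sub continuous_const).div_const 2
  have hcos : Continuous (fun x => Real.cos ((th η x - c)/2)) := Real.continuous_cos.comp hthc
  have hsin : Continuous (fun x => Real.sin ((th η x - c)/2)) := Real.continuous_sin.comp hthc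
  exact ((hηc.continuousAt.div_const 2).mul
      (hcos.continuousAt.div hsin.continuousAt hs)).sub
    (hdc.continuousAt.div ((continuous_const.mul hηc).continuousAt) (by simpa using hη0))

lemma continuous_Qf {η : ℝ → ℝ} (hηc : Continuous η) (hdc : Continuous (deriv η))
    (hddc : Continuous (deriv (deriv η))) (hη0 : ∀ u, η u ≠ 0) :
    Continuous (Qf η) :=
  (((hηc.pow 2).div_const 4).add
      (hddc.div (continuous_const.mul hηc) (fun u => by simpa using hη0 u))).sub
    (continuous_const.mul ((hdc.div hηc hη0).pow 2))

lemma continuous_h1f {η : ℝ → ℝ} (hηc : Continuous η) (hdc : Continuous (deriv η))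
    (hddc : Continuous (deriv (deriv η))) (hη0 : ∀ u, η u ≠ 0) :
    Continuous (h1f η) :=
  (((Real.continuous_sin.comp (continuous_id.div_const 2)).div_const 2).pow 2).sub
    ((continuous_Qf hηc hdc hddc hη0).mul
      ((Real.continuous_cos.comp (continuous_id.div_const 2)).pow 2))

lemma continuous_h2f {η : ℝ → ℝ} (hηc : Continuous η) (hdc : Continuous (deriv η))
    (hddc : Continuous (deriv (deriv η))) (hη0 : ∀ u, η u ≠ 0) :
    Continuous (h2f η) :=
  (((Real.continuous_cos.comp (continuous_id.div_const 2)).div_const 2).pow 2).sub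
    ((continuous_Qf hηc hdc hddc hη0).mul
      ((Real.continuous_sin.comp (continuous_id.div_const 2)).pow 2))

lemma continuous_dG {η : ℝ → ℝ} (hηc : Continuous η) (hdc : Continuous (deriv η))
    (hddc : Continuous (deriv (deriv η))) (hη0 : ∀ u, η u ≠ 0) :
    Continuous (dG η) :=
  ((hddc.mul hηc).sub (hdc.mul hdc)).div (hηc.pow 2) (fun u => pow_ne_zero 2 (hη0 u))

lemma hasDerivAt_sin_half (u : ℝ) :
    HasDerivAt (fun x : ℝ => Real.sin (x/2)) (Real.cos (u/2)/2) u := by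
  have h := (Real.hasDerivAt_sin (u/2)).comp u ((hasDerivAt_id u).div_const 2)
  refine h.congr_deriv ?_
  ring

lemma hasDerivAt_cos_half (u : ℝ) :
    HasDerivAt (fun x : ℝ => Real.cos (x/2)) (-Real.sin (u/2)/2) u := by
  have h := (Real.hasDerivAt_cos (u/2)).comp u ((hasDerivAt_id u).div_const 2)
  refine h.congr_deriv ?_
  ring

theorem main_ineq (η : ℝ → ℝ) (hsmooth : ContDiff ℝ (⊤ : ℕ∞) η) (hpos : ∀ u, 0 < η u)
    (hper : Function.Periodic η (2 * π))
    (hwind : (∫ u in (0:ℝ)..(2 * π), η u) = 2 * π) :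
    (∫ u in (0:ℝ)..(2 * π), (η u ^ 2 - (deriv η u / η u) ^ 2)) ≤ 2 * π := by
  -- regularity facts
  obtain ⟨hd1, hd2, hddc⟩ := smooth_facts hsmooth
  have hηc : Continuous η := hd1.continuous
  have hdc : Continuous (deriv η) := hd2.continuous
  have hη0 : ∀ u, η u ≠ 0 := fun u => (hpos u).ne'
  have hπ : 0 < π := Real.pi_pos
  -- θ facts
  have hthmono : StrictMono (th η) :=
    strictMono_of_hasDerivAt_pos (hasDerivAt_th hηc) hpos
  have hth0 : th η 0 = 0 := integral_same
  have hth2 : th η (2*π) = 2*π := hwind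
  have hη2 : η (2*π) = η 0 := by simpa using hper 0
  have hdη2 : deriv η (2*π) = deriv η 0 := by
    have : deriv η (0 + 2*π) = deriv η 0 := by
      conv_rhs => rw [show deriv η 0 = deriv (fun u => η (u + 2*π)) 0 by
        apply Filter.EventuallyEq.deriv_eq
        filter_upwards with u using (hper u).symm]
      rw [deriv_comp_add_const]
    simpa using this
  -- piece 2 : test function sin(u/2)
  have hΦ2 : ∀ x : ℝ, HasDerivAt (fun y : ℝ => ∫ t in (0:ℝ)..y, h2f η t) (h2f η x) x :=
    fun x => ((continuous_h2f hηc hdc hddc hη0).integral_hasStrictDerivAt 0 x).hasDerivAt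
  have hJ2 : 0 ≤ ∫ t in (0:ℝ)..(2*π), h2f η t := by
    have hpiece := piece (h := h2f η) (Φ := fun y : ℝ => ∫ t in (0:ℝ)..y, h2f η t)
        (b := fun u => (Real.sin (u/2))^2 * rf η 0 u)
        (db := fun u => ((Real.cos (u/2)/2)^2 - Qf η u * (Real.sin (u/2))^2)
            - (Real.cos (u/2)/2 - rf η 0 u * Real.sin (u/2))^2)
        (a := 0) (c := 2*π) (La := 0) (Lc := 0) (by linarith) hΦ2 ?_ ?_ ?_ ?_
    · simpa [intervalIntegral.integral_same] using hpiece
    · -- derivative of b on the open interval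
      intro u hu
      have hlo : 0 < th η u := by
        have := hthmono hu.1; rwa [hth0] at this
      have hhi : th η u < 2*π := by
        have := hthmono hu.2; rwa [hth2] at this
      have hs : Real.sin ((th η u - 0)/2) ≠ 0 :=
        (Real.sin_pos_of_pos_of_lt_pi (by linarith) (by linarith)).ne'
      have hb := hasDerivAt_b hηc hd1 hd2 (hη0 u) 0 hs (hasDerivAt_sin_half u)
      simpa [h2f] using hb
    · -- derivative dominated by h2f
      intro u hu
      simp only [h2f]
      nlinarith [sq_nonneg (Real.cos (u/2)/2 - rf η 0 u * Real.sin (u/2))]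
    · -- limit at 0
      have hsA : Real.sin ((th η 0 - 0)/2) = 0 := by rw [hth0]; norm_num
      have hA : HasDerivAt (fun x => (th η x - 0)/2) (η 0 / 2) 0 :=
        ((hasDerivAt_th hηc 0).sub_const 0).div_const 2
      have hT := tendsto_b_zero (ψ := fun x => Real.sin (x/2)) (u₀ := 0)
        hηc (hη0 0) hdc (by norm_num) (hasDerivAt_sin_half 0) hA
        (div_ne_zero (hη0 0) two_ne_zero) hsA
      exact hT.mono_left (nhdsWithin_mono _ (fun x hx => (mem_compl_singleton_iff).mpr hx.ne'))
    · -- limit at 2π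
      have hsA : Real.sin ((th η (2*π) - 0)/2) = 0 := by
        rw [hth2, show (2*π - 0)/2 = π by ring, Real.sin_pi]
      have hψ0 : Real.sin ((2*π)/2) = 0 := by
        rw [show (2*π)/2 = π by ring, Real.sin_pi]
      have hA : HasDerivAt (fun x => (th η x - 0)/2) (η (2*π) / 2) (2*π) :=
        ((hasDerivAt_th hηc (2*π)).sub_const 0).div_const 2
      have hT := tendsto_b_zero (ψ := fun x => Real.sin (x/2)) (u₀ := 2*π)
        hηc (hη0 (2*π)) hdc hψ0 (hasDerivAt_sin_half (2*π)) hA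
        (div_ne_zero (hη0 (2*π)) two_ne_zero) hsA
      exact hT.mono_left (nhdsWithin_mono _ (fun x hx => (mem_compl_singleton_iff).mpr hx.ne))
  -- piece 1 : test function cos(u/2), matched solution with phase c₁ = θ(π)
  set c₁ : ℝ := th η π with hc₁def
  have hc₁pos : 0 < c₁ := by
    have := hthmono hπ; rwa [hth0] at this
  have hc₁lt : c₁ < 2*π := by
    have := hthmono (show π < 2*π by linarith); rwa [hth2] at this
  have hΦ1 : ∀ x : ℝ, HasDerivAt (fun y : ℝ => ∫ t in (0:ℝ)..y, h1f η t) (h1f η x) x :=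
    fun x => ((continuous_h1f hηc hdc hddc hη0).integral_hasStrictDerivAt 0 x).hasDerivAt
  have hsc₁ : Real.sin (c₁/2) ≠ 0 :=
    (Real.sin_pos_of_pos_of_lt_pi (by linarith) (by linarith)).ne'
  -- limits of b1 at π (interior matched zero)
  have hbπ : Filter.Tendsto (fun u => (Real.cos (u/2))^2 * rf η c₁ u)
      (nhdsWithin π {π}ᶜ) (nhds 0) := by
    have hsA : Real.sin ((th η π - c₁)/2) = 0 := by
      rw [← hc₁def, sub_self]; norm_num
    have hψ0 : Real.cos (π/2) = 0 := Real.cos_pi_div_two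
    have hA : HasDerivAt (fun x => (th η x - c₁)/2) (η π / 2) π :=
      ((hasDerivAt_th hηc π).sub_const c₁).div_const 2
    exact tendsto_b_zero (ψ := fun x => Real.cos (x/2)) (u₀ := π)
      hηc (hη0 π) hdc hψ0 (hasDerivAt_cos_half π) hA
      (div_ne_zero (hη0 π) two_ne_zero) hsA
  -- piece on (0, π)
  have hbA : ∀ u ∈ Set.Ioo (0:ℝ) π,
      HasDerivAt (fun u => (Real.cos (u/2))^2 * rf η c₁ u)
        ((((-Real.sin (u/2)/2)^2 - Qf η u * (Real.cos (u/2))^2)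
          - (-Real.sin (u/2)/2 - rf η c₁ u * Real.cos (u/2))^2)) u := by
    intro u hu
    have hlo : 0 < th η u := by
      have := hthmono hu.1; rwa [hth0] at this
    have hhi : th η u < c₁ := hthmono hu.2
    have hs : Real.sin ((th η u - c₁)/2) ≠ 0 :=
      (Real.sin_neg_of_neg_of_neg_pi_lt (by linarith) (by linarith)).ne
    exact hasDerivAt_b hηc hd1 hd2 (hη0 u) c₁ hs (hasDerivAt_cos_half u)
  have hbB : ∀ u ∈ Set.Ioo π (2*π),
      HasDerivAt (fun u => (Real.cos (u/2))^2 * rf η c₁ u)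
        ((((-Real.sin (u/2)/2)^2 - Qf η u * (Real.cos (u/2))^2)
          - (-Real.sin (u/2)/2 - rf η c₁ u * Real.cos (u/2))^2)) u := by
    intro u hu
    have hlo : c₁ < th η u := hthmono hu.1
    have hhi : th η u < 2*π := by
      have := hthmono hu.2; rwa [hth2] at this
    have hs : Real.sin ((th η u - c₁)/2) ≠ 0 :=
      (Real.sin_pos_of_pos_of_lt_pi (by linarith) (by linarith)).ne'
    exact hasDerivAt_b hηc hd1 hd2 (hη0 u) c₁ hs (hasDerivAt_cos_half u)
  have hleA : ∀ u : ℝ,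
      ((((-Real.sin (u/2)/2)^2 - Qf η u * (Real.cos (u/2))^2)
          - (-Real.sin (u/2)/2 - rf η c₁ u * Real.cos (u/2))^2)) ≤ h1f η u := by
    intro u
    simp only [h1f]
    nlinarith [sq_nonneg (-Real.sin (u/2)/2 - rf η c₁ u * Real.cos (u/2)), sq_nonneg (Real.sin (u/2)/2 + Real.sin (u/2)/2)]
  have hb0cont : Filter.Tendsto (fun u => (Real.cos (u/2))^2 * rf η c₁ u)
      (nhds 0) (nhds ((Real.cos ((0:ℝ)/2))^2 * rf η c₁ 0)) := by
    have hs0 : Real.sin ((th η 0 - c₁)/2) ≠ 0 := by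
      rw [hth0, show ((0:ℝ) - c₁)/2 = -(c₁/2) by ring, Real.sin_neg]
      exact neg_ne_zero.mpr hsc₁
    exact (((Real.continuous_cos.comp (continuous_id.div_const 2)).pow 2).continuousAt.mul
      (continuousAt_rf hηc hdc (hη0 0) hs0)).tendsto
  have hb2cont : Filter.Tendsto (fun u => (Real.cos (u/2))^2 * rf η c₁ u)
      (nhds (2*π)) (nhds ((Real.cos ((2*π)/2))^2 * rf η c₁ (2*π))) := by
    have hs2 : Real.sin ((th η (2*π) - c₁)/2) ≠ 0 := by
      rw [hth2, show ((2*π) - c₁)/2 = π - c₁/2 by ring, Real.sin_pi_sub]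
      exact hsc₁
    exact (((Real.continuous_cos.comp (continuous_id.div_const 2)).pow 2).continuousAt.mul
      (continuousAt_rf hηc hdc (hη0 (2*π)) hs2)).tendsto
  have hpA := piece (h := h1f η) (Φ := fun y : ℝ => ∫ t in (0:ℝ)..y, h1f η t)
      (b := fun u => (Real.cos (u/2))^2 * rf η c₁ u)
      (db := fun u => ((-Real.sin (u/2)/2)^2 - Qf η u * (Real.cos (u/2))^2)
          - (-Real.sin (u/2)/2 - rf η c₁ u * Real.cos (u/2))^2)
      (a := 0) (c := π) (La := (Real.cos ((0:ℝ)/2))^2 * rf η c₁ 0) (Lc := 0) hπ hΦ1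
      hbA (fun u _ => hleA u)
      (hb0cont.mono_left nhdsWithin_le_nhds)
      (hbπ.mono_left (nhdsWithin_mono _ (fun x hx => (mem_compl_singleton_iff).mpr hx.ne)))
  have hpB := piece (h := h1f η) (Φ := fun y : ℝ => ∫ t in (0:ℝ)..y, h1f η t)
      (b := fun u => (Real.cos (u/2))^2 * rf η c₁ u)
      (db := fun u => ((-Real.sin (u/2)/2)^2 - Qf η u * (Real.cos (u/2))^2)
          - (-Real.sin (u/2)/2 - rf η c₁ u * Real.cos (u/2))^2)
      (a := π) (c := 2*π) (La := 0) (Lc := (Real.cos ((2*π)/2))^2 * rf η c₁ (2*π))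
      (by linarith) hΦ1 hbB (fun u _ => hleA u)
      (hbπ.mono_left (nhdsWithin_mono _ (fun x hx => (mem_compl_singleton_iff).mpr hx.ne')))
      (hb2cont.mono_left nhdsWithin_le_nhds)
  -- periodic match of the boundary values
  have hbmatch : (Real.cos ((2*π)/2))^2 * rf η c₁ (2*π)
      = (Real.cos ((0:ℝ)/2))^2 * rf η c₁ 0 := by
    rw [show ((2:ℝ)*π)/2 = π by ring, Real.cos_pi, show ((0:ℝ)/2) = 0 by ring, Real.cos_zero]
    simp only [rf, hth2, hth0, hη2, hdη2]
    rw [show ((2:ℝ)*π - c₁)/2 = π - c₁/2 by ring, show ((0:ℝ) - c₁)/2 = -(c₁/2) by ring,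
      Real.cos_pi_sub, Real.sin_pi_sub, Real.cos_neg, Real.sin_neg]
    field_simp [hη0 0]
  have hJ1 : 0 ≤ ∫ t in (0:ℝ)..(2*π), h1f η t := by
    have hz : (∫ t in (0:ℝ)..(0:ℝ), h1f η t) = 0 := intervalIntegral.integral_same
    rw [hz] at hpA
    linarith [hpA, hpB, hbmatch.le, hbmatch.ge]
  -- the exact total-derivative term
  have hGd : ∀ x : ℝ, HasDerivAt (fun v => deriv η v / η v) (dG η x) x :=
    fun x => ((hd2 x).hasDerivAt).div ((hd1 x).hasDerivAt) (hη0 x)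
  have hGint : (∫ u in (0:ℝ)..(2*π), dG η u) = 0 := by
    rw [intervalIntegral.integral_eq_sub_of_hasDerivAt (fun x _ => hGd x)
      ((continuous_dG hηc hdc hddc hη0).intervalIntegrable _ _)]
    rw [hη2, hdη2, sub_self]
  -- pointwise identity
  have key : ∀ u : ℝ, η u ^ 2 - (deriv η u / η u)^2
      = 1 - 4 * h1f η u - 4 * h2f η u - 2 * dG η u := by
    intro u
    have hpy : (Real.cos (u/2))^2 = 1 - (Real.sin (u/2))^2 := by
      linarith [Real.sin_sq_add_cos_sq (u/2)]
    simp only [h1f, h2f, Qf, dG, div_pow]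
    rw [hpy]
    field_simp [hη0 u]
    have hh : η u ^ 3 * (η u)⁻¹ ^ 3 = 1 := by
      rw [← mul_pow, mul_inv_cancel₀ (hη0 u), one_pow]
    linear_combination 0 * (3 * deriv η u ^ 2 - 2 * η u * deriv (deriv η) u
      + η u ^ 2 - η u ^ 4) * hh
  -- assembly
  have i1 : IntervalIntegrable (fun _ : ℝ => (1:ℝ)) volume 0 (2*π) :=
    continuous_const.intervalIntegrable _ _
  have ih1 : IntervalIntegrable (fun u => 4 * h1f η u) volume 0 (2*π) :=
    (continuous_const.mul (continuous_h1f hηc hdc hddc hη0)).intervalIntegrable _ _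
  have ih2 : IntervalIntegrable (fun u => 4 * h2f η u) volume 0 (2*π) :=
    (continuous_const.mul (continuous_h2f hηc hdc hddc hη0)).intervalIntegrable _ _
  have idG : IntervalIntegrable (fun u => 2 * dG η u) volume 0 (2*π) :=
    (continuous_const.mul (continuous_dG hηc hdc hddc hη0)).intervalIntegrable _ _
  have split : (∫ u in (0:ℝ)..(2*π), (η u ^ 2 - (deriv η u / η u) ^ 2))
      = (∫ _ in (0:ℝ)..(2*π), (1:ℝ)) - (∫ u in (0:ℝ)..(2*π), 4 * h1f η u)
        - (∫ u in (0:ℝ)..(2*π), 4 * h2f η u) - (∫ u in (0:ℝ)..(2*π), 2 * dG η u) := by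
    rw [← intervalIntegral.integral_sub i1 ih1, ← intervalIntegral.integral_sub (i1.sub ih1) ih2,
      ← intervalIntegral.integral_sub ((i1.sub ih1).sub ih2) idG]
    exact intervalIntegral.integral_congr (fun u _ => key u)
  have hone : (∫ _ in (0:ℝ)..(2*π), (1:ℝ)) = 2*π := by simp
  have h4a : (∫ u in (0:ℝ)..(2*π), 4 * h1f η u) = 4 * ∫ t in (0:ℝ)..(2*π), h1f η t :=
    intervalIntegral.integral_const_mul _ _
  have h4b : (∫ u in (0:ℝ)..(2*π), 4 * h2f η u) = 4 * ∫ t in (0:ℝ)..(2*π), h2f η t :=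
    intervalIntegral.integral_const_mul _ _
  have h2g : (∫ u in (0:ℝ)..(2*π), 2 * dG η u) = 2 * ∫ u in (0:ℝ)..(2*π), dG η u :=
    intervalIntegral.integral_const_mul _ _
  rw [split, hone, h4a, h4b, h2g, hGint]
  linarith

end SchwAux

end SchwAuxSec

/-- For a smooth, strictly positive, `2π`-periodic `η` with winding constraint
`∫₀^{2π} η = 2π`, one has `∫₀^{2π} (η² − (η′/η)²) ≤ 2π`, with equality attained
at `η ≡ 1`.  Equivalently, the Schwarzian action
`I = −φ̄_b ∫₀^{2π} (η² − (η′/η)²)` with `φ̄_b > 0` is bounded below by `−2π φ̄_b`. -/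
theorem schwarzian_bound_two_pi
    (η : ℝ → ℝ) (hsmooth : ContDiff ℝ (⊤ : ℕ∞) η) (hpos : ∀ u, 0 < η u)
    (hper : Function.Periodic η (2 * π))
    (hwind : (∫ u in (0:ℝ)..(2 * π), η u) = 2 * π) :
    (∫ u in (0:ℝ)..(2 * π), (η u ^ 2 - (deriv η u / η u) ^ 2)) ≤ 2 * π ∧
      (∫ u in (0:ℝ)..(2 * π),
          (((fun _ : ℝ => (1:ℝ)) u) ^ 2
            - (deriv (fun _ : ℝ => (1:ℝ)) u / ((fun _ : ℝ => (1:ℝ)) u)) ^ 2))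
        = 2 * π ∧
      (∀ φb : ℝ, 0 < φb →
        -2 * π * φb ≤ -φb * ∫ u in (0:ℝ)..(2 * π), (η u ^ 2 - (deriv η u / η u) ^ 2)) := by
  have hmain := SchwAux.main_ineq η hsmooth hpos hper hwind
  refine ⟨hmain, ?_, ?_⟩
  · have h1 : ∀ u : ℝ, ((fun _ : ℝ => (1:ℝ)) u) ^ 2
        - (deriv (fun _ : ℝ => (1:ℝ)) u / ((fun _ : ℝ => (1:ℝ)) u)) ^ 2 = 1 := by
      intro u; simp
    rw [intervalIntegral.integral_congr (fun u _ => h1 u)]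
    simp
  · intro φb hφb
    nlinarith [hmain, hφb.le]
end

section
/- Let λ > 2 and set a = (λ − √(λ² − 4))/2 and b = (λ + √(λ² − 4))/2, so that a·b = 1, a + b = λ, and (b − η)(η − a) = −η² + λη − 1. Then ∫_a^b ( −2η² + 2λη − λ − 1 ) / ( η·√((b − η)(η − a)) ) dη = −π. -/
/-!
Write `Q x = (b - x) * (x - a)`. On `(a, b)` the weights `1/√Q` and `1/(x √Q)` are derivatives of
`arcsin ((2x - a - b)/(b - a))` and `arcsin (((a + b)x - 2ab)/(x(b - a))) / √(ab)`, whose arguments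
run from `-1` to `1`, and `x/√Q` differs from `(a + b)/(2√Q)` by the derivative of `-√Q`, which
vanishes at both ends. Hence the three weights integrate to `π`, `π/√(ab)` and `π(a + b)/2`.
Since the integrand is `(2λ - 2x)/√Q - (λ + 1)/(x √Q)`, the integral equals
`2πλ - π(a + b) - π(λ + 1)/√(ab)`, which is `-π` when `a + b = λ` and `ab = 1`.
Integrability is free: `1/√Q` is the nonnegative derivative of a function continuous on `[a, b]`,
and the other integrands are continuous multiples of it.
-/

open Real Set intervalIntegral MeasureTheory

theorem HasDerivAt.arcsin_of_one_sub_sq_eq {f : ℝ → ℝ} {f' v x : ℝ} (hf : HasDerivAt f f' x)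
    (hv : 0 < v) (h : 1 - f x ^ 2 = v ^ 2) :
    HasDerivAt (fun y => arcsin (f y)) (f' / v) x := by
  have hlt : |f x| < 1 := (sq_lt_one_iff_abs_lt_one _).1 (by nlinarith)
  obtain ⟨h₁, h₂⟩ := abs_lt.1 hlt
  have := (hasDerivAt_arcsin h₁.ne' h₂.ne).comp x hf
  rwa [h, sqrt_sq hv.le, one_div_mul_eq_div] at this

section ChebyshevWeight

variable {a b x : ℝ}

theorem hasDerivAt_sqrt_mul_sub (hx : x ∈ Ioo a b) :
    HasDerivAt (fun y => √((b - y) * (y - a))) (((a + b) / 2 - x) / √((b - x) * (x - a))) x := by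
  have hQ : 0 < (b - x) * (x - a) := mul_pos (by linarith [hx.2]) (by linarith [hx.1])
  have hpoly : HasDerivAt (fun y => (b - y) * (y - a)) (-1 * (x - a) + (b - x) * 1) x :=
    ((hasDerivAt_id x).const_sub b).mul ((hasDerivAt_id x).sub_const a)
  convert hpoly.sqrt hQ.ne' using 1
  field_simp
  ring

theorem hasDerivAt_arcsin_affine (hx : x ∈ Ioo a b) :
    HasDerivAt (fun y => arcsin ((2 * y - (a + b)) / (b - a))) (1 / √((b - x) * (x - a))) x := by
  have hba : 0 < b - a := by linarith [hx.1, hx.2]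
  have hQ : 0 < (b - x) * (x - a) := mul_pos (by linarith [hx.2]) (by linarith [hx.1])
  have hu : HasDerivAt (fun y => (2 * y - (a + b)) / (b - a)) (2 / (b - a)) x := by
    simpa using (((hasDerivAt_id x).const_mul 2).sub_const (a + b)).div_const (b - a)
  have hsq : 1 - ((2 * x - (a + b)) / (b - a)) ^ 2 = (2 * √((b - x) * (x - a)) / (b - a)) ^ 2 := by
    rw [div_pow, div_pow, mul_pow, sq_sqrt hQ.le]
    field_simp
    ring
  convert hu.arcsin_of_one_sub_sq_eq (by positivity) hsq using 1
  field_simp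

theorem hasDerivAt_arcsin_moebius (ha : 0 < a) (hx : x ∈ Ioo a b) :
    HasDerivAt (fun y => arcsin (((a + b) * y - 2 * a * b) / (y * (b - a))))
      (√(a * b) / (x * √((b - x) * (x - a)))) x := by
  have hx0 : 0 < x := ha.trans hx.1
  have hba : 0 < b - a := by linarith [hx.1, hx.2]
  have hab_pos : 0 < a * b := mul_pos ha (by linarith [hx.1, hx.2])
  have hQ : 0 < (b - x) * (x - a) := mul_pos (by linarith [hx.2]) (by linarith [hx.1])
  have hu : HasDerivAt (fun y => ((a + b) * y - 2 * a * b) / (y * (b - a)))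
      (2 * a * b / (x ^ 2 * (b - a))) x := by
    refine ((((hasDerivAt_id' x).const_mul (a + b)).sub_const (2 * a * b)).fun_div
      ((hasDerivAt_id' x).mul_const (b - a)) (by positivity)).congr_deriv ?_
    field_simp
    ring
  have hsq : 1 - (((a + b) * x - 2 * a * b) / (x * (b - a))) ^ 2
      = (2 * √(a * b) * √((b - x) * (x - a)) / (x * (b - a))) ^ 2 := by
    rw [div_pow, div_pow, mul_pow, mul_pow, mul_pow, sq_sqrt hab_pos.le, sq_sqrt hQ.le]
    field_simp
    ring
  convert hu.arcsin_of_one_sub_sq_eq (by positivity) hsq using 1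
  have hs : √(a * b) ^ 2 = a * b := sq_sqrt hab_pos.le
  field_simp
  linear_combination hs

theorem intervalIntegrable_one_div_sqrt_mul_sub (hab : a < b) :
    IntervalIntegrable (fun x => 1 / √((b - x) * (x - a))) volume a b := by
  rw [intervalIntegrable_iff_integrableOn_Ioc_of_le hab.le]
  exact integrableOn_deriv_of_nonneg (by fun_prop) (fun x hx => hasDerivAt_arcsin_affine hx)
    (fun x _ => by positivity)

theorem integral_one_div_sqrt_mul_sub (hab : a < b) :
    ∫ x in a..b, 1 / √((b - x) * (x - a)) = π := by
  have hba : b - a ≠ 0 := (sub_pos.2 hab).ne'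
  rw [integral_eq_sub_of_hasDerivAt_of_le hab.le (by fun_prop)
    (fun x hx => hasDerivAt_arcsin_affine hx) (intervalIntegrable_one_div_sqrt_mul_sub hab)]
  have hb : (2 * b - (a + b)) / (b - a) = 1 := by field_simp; ring
  have ha : (2 * a - (a + b)) / (b - a) = -1 := by field_simp; ring
  rw [hb, ha, arcsin_one, arcsin_neg_one]
  ring

theorem integral_div_sqrt_mul_sub (hab : a < b) :
    ∫ x in a..b, x / √((b - x) * (x - a)) = π * (a + b) / 2 := by
  have hint := intervalIntegrable_one_div_sqrt_mul_sub hab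
  have hint_odd : IntervalIntegrable (fun x => ((a + b) / 2 - x) / √((b - x) * (x - a)))
      volume a b := by
    simpa only [mul_one_div] using hint.continuousOn_mul (g := fun x => (a + b) / 2 - x)
      (by fun_prop)
  have hodd : ∫ x in a..b, ((a + b) / 2 - x) / √((b - x) * (x - a)) = 0 := by
    rw [integral_eq_sub_of_hasDerivAt_of_le hab.le (by fun_prop)
      (fun x hx => hasDerivAt_sqrt_mul_sub hx) hint_odd]
    simp
  calc ∫ x in a..b, x / √((b - x) * (x - a))
      = ∫ x in a..b, ((a + b) / 2 * (1 / √((b - x) * (x - a)))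
          - ((a + b) / 2 - x) / √((b - x) * (x - a))) :=
        integral_congr fun x _ => by ring
    _ = π * (a + b) / 2 := by
        rw [integral_sub (hint.const_mul _) hint_odd, intervalIntegral.integral_const_mul,
          integral_one_div_sqrt_mul_sub hab, hodd]
        ring

theorem intervalIntegrable_one_div_mul_sqrt_mul_sub (ha : 0 < a) (hab : a < b) :
    IntervalIntegrable (fun x => 1 / (x * √((b - x) * (x - a)))) volume a b := by
  have hpos : ∀ x ∈ uIcc a b, x ≠ 0 := fun x hx =>
    (ha.trans_le (by rw [uIcc_of_le hab.le] at hx; exact hx.1)).ne'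
  simpa only [one_div_mul_one_div] using
    (intervalIntegrable_one_div_sqrt_mul_sub hab).continuousOn_mul (g := fun x => 1 / x)
      (continuousOn_const.div continuousOn_id hpos)

theorem integral_one_div_mul_sqrt_mul_sub (ha : 0 < a) (hab : a < b) :
    ∫ x in a..b, 1 / (x * √((b - x) * (x - a))) = π / √(a * b) := by
  have hba : b - a ≠ 0 := (sub_pos.2 hab).ne'
  have hpos : ∀ x ∈ Icc a b, x ≠ 0 := fun x hx => (ha.trans_le hx.1).ne'
  have hint := intervalIntegrable_one_div_mul_sqrt_mul_sub ha hab
  have hcont : ContinuousOn (fun y => arcsin (((a + b) * y - 2 * a * b) / (y * (b - a))))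
      (Icc a b) :=
    continuous_arcsin.comp_continuousOn <| by
      fun_prop (disch := exact fun x hx => mul_ne_zero (hpos x hx) hba)
  have hab0 : √(a * b) ≠ 0 := (sqrt_pos.2 (mul_pos ha (ha.trans hab))).ne'
  have hb : ((a + b) * b - 2 * a * b) / (b * (b - a)) = 1 := by
    field_simp [(ha.trans hab).ne']
    ring
  have ha' : ((a + b) * a - 2 * a * b) / (a * (b - a)) = -1 := by
    field_simp [ha.ne']
    ring
  calc ∫ x in a..b, 1 / (x * √((b - x) * (x - a)))
      = ∫ x in a..b, (√(a * b))⁻¹ * (√(a * b) / (x * √((b - x) * (x - a)))) :=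
        integral_congr fun x _ => by rw [← mul_div_assoc, inv_mul_cancel₀ hab0]
    _ = π / √(a * b) := by
        rw [intervalIntegral.integral_const_mul, integral_eq_sub_of_hasDerivAt_of_le hab.le hcont
          (fun x hx => hasDerivAt_arcsin_moebius ha hx)
          (by simpa only [mul_one_div] using hint.const_mul (√(a * b))),
          hb, ha', arcsin_one, arcsin_neg_one]
        ring

end ChebyshevWeight

theorem integral_onshell_schwarzian {a b l : ℝ} (ha : 0 < a) (hab : a < b) (hmul : a * b = 1)
    (hsum : a + b = l) :
    ∫ x in a..b, (-2 * x ^ 2 + 2 * l * x - l - 1) / (x * √((b - x) * (x - a))) = -π := by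
  have hint := intervalIntegrable_one_div_sqrt_mul_sub hab
  have hint_id : IntervalIntegrable (fun x => x / √((b - x) * (x - a))) volume a b := by
    simpa only [mul_one_div] using hint.continuousOn_mul (g := fun x => x) (by fun_prop)
  have hint_inv := intervalIntegrable_one_div_mul_sqrt_mul_sub ha hab
  calc ∫ x in a..b, (-2 * x ^ 2 + 2 * l * x - l - 1) / (x * √((b - x) * (x - a)))
      = ∫ x in a..b, (2 * l * (1 / √((b - x) * (x - a))) - 2 * (x / √((b - x) * (x - a)))
          - (l + 1) * (1 / (x * √((b - x) * (x - a))))) := by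
        refine integral_congr fun x hx => ?_
        have hx0 : x ≠ 0 := (ha.trans_le (by rw [uIcc_of_le hab.le] at hx; exact hx.1)).ne'
        rcases eq_or_ne √((b - x) * (x - a)) 0 with hs | hs
        · simp [hs]
        · field_simp
          ring
    _ = 2 * l * π - 2 * (π * (a + b) / 2) - (l + 1) * (π / √(a * b)) := by
        rw [integral_sub ((hint.const_mul _).sub (hint_id.const_mul _)) (hint_inv.const_mul _),
          integral_sub (hint.const_mul _) (hint_id.const_mul _),
          intervalIntegral.integral_const_mul, intervalIntegral.integral_const_mul,
          intervalIntegral.integral_const_mul, integral_one_div_sqrt_mul_sub hab,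
          integral_div_sqrt_mul_sub hab, integral_one_div_mul_sqrt_mul_sub ha hab]
    _ = -π := by
        rw [hmul, sqrt_one, hsum]
        ring

/-- For `λ > 2`, with turning points `a = (λ − √(λ² − 4))/2` and
`b = (λ + √(λ² − 4))/2` (so that `a b = 1`, `a + b = λ`, and
`(b − η)(η − a) = −η² + λη − 1`), the on-shell Schwarzian integral satisfies
`∫_a^b (−2η² + 2λη − λ − 1)/(η √((b − η)(η − a))) dη = −π`. -/
theorem onshell_schwarzian_integral
    (l : ℝ) (hl : 2 < l) :
    let a := (l - Real.sqrt (l ^ 2 - 4)) / 2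
    let b := (l + Real.sqrt (l ^ 2 - 4)) / 2
    a * b = 1 ∧ a + b = l ∧
      (∀ η : ℝ, (b - η) * (η - a) = -η ^ 2 + l * η - 1) ∧
      (∫ η in a..b,
          (-2 * η ^ 2 + 2 * l * η - l - 1) / (η * Real.sqrt ((b - η) * (η - a))))
        = -π := by
  intro a b
  have hdisc : 0 < l ^ 2 - 4 := by nlinarith
  have hsq : √(l ^ 2 - 4) ^ 2 = l ^ 2 - 4 := sq_sqrt hdisc.le
  have hroot_pos : 0 < √(l ^ 2 - 4) := sqrt_pos.2 hdisc
  have hroot_lt : √(l ^ 2 - 4) < l := by nlinarith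
  have hmul : a * b = 1 := by linear_combination (-1 / 4 : ℝ) * hsq
  have hsum : a + b = l := by ring
  have ha : 0 < a := div_pos (sub_pos.2 hroot_lt) two_pos
  have hab : a < b := by show (l - _) / 2 < (l + _) / 2; linarith
  exact ⟨hmul, hsum, fun η => by linear_combination η * hsum - hmul,
    integral_onshell_schwarzian ha hab hmul hsum⟩
end
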